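/- Let M : ℝⁿ → ℝ^{n×n} be continuously differentiable with M(q) symmetric and invertible for every q, let V : ℝⁿ → ℝ be differentiable, and define the Hamiltonian H(q,p) = (1/2)·pᵀM(q)⁻¹p + V(q). Let D : ℝⁿ → ℝ^{n×n}, let Λ, K_d be constant n×n matrices, and let q_d : ℝ → ℝⁿ be twice differentiable. Along a differentiable curve (q,p) : ℝ → ℝⁿ × ℝⁿ, define q̃(t) := q(t) − q_d(t), p_r(t) := M(q(t))·q_d'(t) − Λ·q̃(t), and σ(t) := p(t) − p_r(t). Suppose (q,p) satisfies q'(t) = M(q(t))⁻¹ p(t) and p'(t) = −∇_q H(q(t),p(t)) + w(t) − D(q(t)) M(q(t))⁻¹ p(t), where the input equals the tracking control law w(t) = p_r'(t) + [∇_q H(q, p̄)]_{p̄ = p_r(t)} + D(q)M(q)⁻¹p_r(t) − K_d M(q)⁻¹σ(t) − M(q)⁻¹Λ q̃(t) + [∇_q (aᵀ M(q)⁻¹ b)]_{a = p_r(t), b = σ(t)} (all gradients ∇_q taken with respect to the first argument q with the momentum-slot vectors held fixed, then evaluated along the curve). Then the error coordinates satisfy the closed-loop error system q̃'(t) = M(q(t))⁻¹(σ(t)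 − Λ q̃(t)) and σ'(t) = −M(q(t))⁻¹ Λ q̃(t) − [∇_q ((1/2)·bᵀ M(q)⁻¹ b)]_{b = σ(t)} − (D(q(t)) + K_d) M(q(t))⁻¹ σ(t). -/

import Mathlib

/-!
Writing `p = p_r + σ` and using the symmetry of `M(q)⁻¹`, the kinetic energy `½ pᵀM(q)⁻¹p` splits
into the energy at `p_r`, the cross term `p_rᵀM(q)⁻¹σ` and the energy at `σ`, and so does its
`q`-gradient. In `σ̇ = ṗ - ṗ_r` the control law cancels `ṗ_r`, the damping at `p_r` and the gradients
of the first two terms (with `V`), leaving the error system; `q̃̇ = M⁻¹p - q̇_d = M⁻¹(σ - Λq̃)` is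
the definition of `p_r`.
-/

open Matrix

/-- The gradient (vector of partial derivatives) of a scalar function on `ℝⁿ` at `q`. -/
noncomputable def gradAt {n : ℕ} (f : (Fin n → ℝ) → ℝ) (q : Fin n → ℝ) : Fin n → ℝ :=
  fun i => fderiv ℝ f q (Pi.single i 1)

section MatrixDifferentiability

variable {𝕜 : Type*} [NontriviallyNormedField 𝕜] {E : Type*} [NormedAddCommGroup E]
  [NormedSpace 𝕜 E] {ι : Type*} [Fintype ι] [DecidableEq ι]
  {A : E → Matrix ι ι 𝕜} {x : E}

theorem DifferentiableAt.matrix_det (hA : ∀ i j, DifferentiableAt 𝕜 (fun y => A y i j) x) :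
    DifferentiableAt 𝕜 (fun y => (A y).det) x := by
  simp only [det_apply']
  exact .fun_sum fun τ _ => .const_mul
    (HasFDerivAt.finsetProd fun i _ => (hA (τ i) i).hasFDerivAt).differentiableAt _

theorem DifferentiableAt.matrix_inv_apply (hA : ∀ i j, DifferentiableAt 𝕜 (fun y => A y i j) x)
    (hdet : IsUnit (A x).det) (i j : ι) :
    DifferentiableAt 𝕜 (fun y => (A y)⁻¹ i j) x := by
  have cramer : (fun y => (A y)⁻¹ i j)
      = fun y => ((A y).det)⁻¹ * ((A y).updateRow j (Pi.single i 1)).det := by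
    funext y
    rw [inv_def, Matrix.smul_apply, Ring.inverse_eq_inv', adjugate_apply]
    rfl
  rw [cramer]
  refine ((DifferentiableAt.matrix_det hA).inv hdet.ne_zero).mul (.matrix_det fun a b => ?_)
  by_cases h : a = j
  · subst h
    simpa only [updateRow_self] using differentiableAt_const _
  · simpa only [updateRow_ne h] using hA a b

theorem DifferentiableAt.dotProduct_inv_mulVec
    (hA : ∀ i j, DifferentiableAt 𝕜 (fun y => A y i j) x) (hdet : IsUnit (A x).det)
    (a b : ι → 𝕜) :
    DifferentiableAt 𝕜 (fun y => a ⬝ᵥ ((A y)⁻¹ *ᵥ b)) x := by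
  simp only [dotProduct, mulVec]
  exact .fun_sum fun i _ => .const_mul
    (.fun_sum fun j _ => (DifferentiableAt.matrix_inv_apply hA hdet i j).mul_const (b j)) (a i)

end MatrixDifferentiability

theorem Matrix.IsSymm.add_dotProduct_mulVec_add {R ι : Type*} [CommRing R] [Fintype ι]
    {S : Matrix ι ι R} (hS : S.IsSymm) (a b : ι → R) :
    (a + b) ⬝ᵥ (S *ᵥ (a + b)) = a ⬝ᵥ (S *ᵥ a) + 2 * (a ⬝ᵥ (S *ᵥ b)) + b ⬝ᵥ (S *ᵥ b) := by
  have hba : b ⬝ᵥ (S *ᵥ a) = a ⬝ᵥ (S *ᵥ b) := by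
    rw [dotProduct_mulVec, ← mulVec_transpose, hS.eq, dotProduct_comm]
  rw [mulVec_add, dotProduct_add, add_dotProduct, add_dotProduct, hba]
  ring

theorem gradAt_add {n : ℕ} {f g : (Fin n → ℝ) → ℝ} {x : Fin n → ℝ}
    (hf : DifferentiableAt ℝ f x) (hg : DifferentiableAt ℝ g x) :
    gradAt (fun y => f y + g y) x = gradAt f x + gradAt g x := by
  funext i
  simp only [gradAt, fderiv_fun_add hf hg, _root_.add_apply, Pi.add_apply]

theorem gradAt_hamiltonian_add {n : ℕ} {M : (Fin n → ℝ) → Matrix (Fin n) (Fin n) ℝ}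
    {V : (Fin n → ℝ) → ℝ} {x : Fin n → ℝ}
    (hM : ∀ i j, DifferentiableAt ℝ (fun q => M q i j) x) (hMsymm : ∀ q, (M q).IsSymm)
    (hdet : IsUnit (M x).det) (hV : DifferentiableAt ℝ V x) (a b : Fin n → ℝ) :
    gradAt (fun q => (1/2 : ℝ) * ((a + b) ⬝ᵥ ((M q)⁻¹ *ᵥ (a + b))) + V q) x
      = gradAt (fun q => (1/2 : ℝ) * (a ⬝ᵥ ((M q)⁻¹ *ᵥ a)) + V q) x
        + gradAt (fun q => a ⬝ᵥ ((M q)⁻¹ *ᵥ b)) x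
        + gradAt (fun q => (1/2 : ℝ) * (b ⬝ᵥ ((M q)⁻¹ *ᵥ b))) x := by
  have expand : (fun q => (1/2 : ℝ) * ((a + b) ⬝ᵥ ((M q)⁻¹ *ᵥ (a + b))) + V q)
      = fun q => ((1/2 : ℝ) * (a ⬝ᵥ ((M q)⁻¹ *ᵥ a)) + V q) + a ⬝ᵥ ((M q)⁻¹ *ᵥ b)
        + (1/2 : ℝ) * (b ⬝ᵥ ((M q)⁻¹ *ᵥ b)) := by
    funext q
    rw [(hMsymm q).inv.add_dotProduct_mulVec_add]
    ring
  have hform := DifferentiableAt.dotProduct_inv_mulVec hM hdet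
  have hfirst : DifferentiableAt ℝ (fun q => (1/2 : ℝ) * (a ⬝ᵥ ((M q)⁻¹ *ᵥ a)) + V q) x :=
    ((hform a a).const_mul _).fun_add hV
  have hlast : DifferentiableAt ℝ (fun q => (1/2 : ℝ) * (b ⬝ᵥ ((M q)⁻¹ *ᵥ b))) x :=
    (hform b b).const_mul _
  rw [expand, gradAt_add (hfirst.fun_add (hform a b)) hlast, gradAt_add hfirst (hform a b)]

theorem closed_loop_error_dynamics
    {n : ℕ}
    (M : (Fin n → ℝ) → Matrix (Fin n) (Fin n) ℝ)
    (hMdiff : ∀ i j, Differentiable ℝ fun q => M q i j)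
    (hMsymm : ∀ q, (M q).IsSymm)
    (hMinv : ∀ q, IsUnit (M q).det)
    (V : (Fin n → ℝ) → ℝ) (hV : Differentiable ℝ V)
    (D : (Fin n → ℝ) → Matrix (Fin n) (Fin n) ℝ)
    (Λ Kd : Matrix (Fin n) (Fin n) ℝ)
    (qd qd' : ℝ → Fin n → ℝ)
    (hqd : ∀ t, HasDerivAt qd (qd' t) t)
    (q p qe pr σ pr' w : ℝ → Fin n → ℝ)
    -- error coordinates and auxiliary momentum reference
    (hqe : ∀ t, qe t = q t - qd t)
    (hpr : ∀ t, pr t = M (q t) *ᵥ qd' t - Λ *ᵥ qe t)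
    (hσ : ∀ t, σ t = p t - pr t)
    (hpr' : ∀ t, HasDerivAt pr (pr' t) t)
    -- the port-Hamiltonian dynamics with input w
    (hq : ∀ t, HasDerivAt q ((M (q t))⁻¹ *ᵥ p t) t)
    (hp : ∀ t, HasDerivAt p
        (-(gradAt (fun q' => (1/2 : ℝ) * (p t ⬝ᵥ ((M q')⁻¹ *ᵥ p t)) + V q') (q t))
          + w t - D (q t) *ᵥ ((M (q t))⁻¹ *ᵥ p t)) t)
    -- the input equals the proposed tracking control law
    (hw : ∀ t, w t =
        pr' t
        + gradAt (fun q' => (1/2 : ℝ) * (pr t ⬝ᵥ ((M q')⁻¹ *ᵥ pr t)) + V q') (q t)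
        + D (q t) *ᵥ ((M (q t))⁻¹ *ᵥ pr t)
        - Kd *ᵥ ((M (q t))⁻¹ *ᵥ σ t)
        - (M (q t))⁻¹ *ᵥ (Λ *ᵥ qe t)
        + gradAt (fun q' => pr t ⬝ᵥ ((M q')⁻¹ *ᵥ σ t)) (q t)) :
    ∀ t,
      HasDerivAt qe ((M (q t))⁻¹ *ᵥ (σ t - Λ *ᵥ qe t)) t ∧
      HasDerivAt σ
        (-((M (q t))⁻¹ *ᵥ (Λ *ᵥ qe t))
          - gradAt (fun q' => (1/2 : ℝ) * (σ t ⬝ᵥ ((M q')⁻¹ *ᵥ σ t))) (q t)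
          - (D (q t) + Kd) *ᵥ ((M (q t))⁻¹ *ᵥ σ t)) t := by
  intro t
  have hp_split : p t = pr t + σ t := by rw [hσ t]; abel
  have hqe' := (hq t).sub (hqd t)
  rw [← show qe = q - qd from funext hqe] at hqe'
  have hσ' := (hp t).sub (hpr' t)
  rw [← show σ = p - pr from funext hσ] at hσ'
  have hgrad := gradAt_hamiltonian_add (V := V) (fun i j => (hMdiff i j).differentiableAt)
    hMsymm (hMinv (q t)) hV.differentiableAt (pr t) (σ t)
  rw [← hp_split] at hgrad
  refine ⟨hqe'.congr_deriv ?_, hσ'.congr_deriv ?_⟩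
  · rw [show σ t - Λ *ᵥ qe t = p t - M (q t) *ᵥ qd' t by rw [hσ t, hpr t]; abel,
      mulVec_sub, mulVec_mulVec, nonsing_inv_mul _ (hMinv (q t)), one_mulVec]
  · rw [hgrad, hw t, hp_split, mulVec_add, mulVec_add, add_mulVec]
    abel
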